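/- arXiv:1804.08585 — 3 statements merged into one kernel-verified Lean document; each statement's English description precedes it below -/
import Mathlib

section
/- Let E be an exact category with enough projectives and P a projective cover of E. If E is cartesian closed, then P has generalised weak simple products: for every pseudo equivalence relation y1, y2 : Y1 ⇉ Y0 in P and every span J ←f Y0 →g X in P with f y1 = f y2 and g y1 = g y2, a generalised weak simple product of f and g with respect to y1, y2 exists. -/
/-!
Exactness of `E` gives the pseudo equivalence relation a quotient `c : Y0 ↠ Q`, for which
`y₁, y₂` is an equality, and `f`, `g` descend to `k : Q ⟶ J ⨯ X`. Cartesian closure gives the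
dependent product `s : S ⟶ J` of `k` along the projection `J ⨯ X ⟶ J`. A `P`-cover `W ↠ S`,
together with a `P`-cover `V` of the pullback of `c` along the evaluation `W ⨯ X ⟶ Q`, is a
generalised weak simple product. For terminality, an arrow `e'` out of a weak product
`W' ← V' → X` that preserves projections has `e' ≫ c` constant on the fibres of the regular
epi `V' ↠ W' ⨯ X`, hence descends to `W' ⨯ X ⟶ Q`; this transposes to `W' ⟶ S`, which lifts
to `W` by projectivity of `W'`.
-/

open CategoryTheory Limits

namespace ExComp

universe v u

variable {E : Type u} [Category.{v} E]

/-- A regular epimorphism, as a property of a morphism. -/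
def RegEpi {A B : E} (f : A ⟶ B) : Prop := Nonempty (RegularEpi f)

/-- An object is (regular) projective if its covariant hom functor sends regular
epimorphisms to surjections. -/
def RegProjective (X : E) : Prop :=
  ∀ ⦃A B : E⦄ (e : A ⟶ B), RegEpi e → ∀ f : X ⟶ B, ∃ g : X ⟶ A, g ≫ e = f

/-- `E` has enough projectives: every object admits a regular epimorphism from a
projective object. -/
def EnoughRegProjectives (E : Type u) [Category.{v} E] : Prop :=
  ∀ A : E, ∃ (X : E) (p : X ⟶ A), RegProjective X ∧ RegEpi p

/-- An internal equivalence relation: a jointly monic, reflexive, symmetric and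
transitive pair of parallel arrows. -/
structure IsEquivRelPair {R X : E} (r₁ r₂ : R ⟶ X) : Prop where
  jointlyMono : ∀ ⦃T : E⦄ (h k : T ⟶ R), h ≫ r₁ = k ≫ r₁ → h ≫ r₂ = k ≫ r₂ → h = k
  refl : ∃ d : X ⟶ R, d ≫ r₁ = 𝟙 X ∧ d ≫ r₂ = 𝟙 X
  symm : ∃ s : R ⟶ R, s ≫ r₁ = r₂ ∧ s ≫ r₂ = r₁
  trans : ∀ ⦃T : E⦄ (p q : T ⟶ R), p ≫ r₂ = q ≫ r₁ →
    ∃ t : T ⟶ R, t ≫ r₁ = p ≫ r₁ ∧ t ≫ r₂ = q ≫ r₂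

/-- An exact category: a finitely complete category where every morphism factors as a
regular epi followed by a mono, regular epis are stable under pullback, and every
internal equivalence relation is effective (it is the kernel pair of the coequaliser
it admits). -/
structure IsExact (E : Type u) [Category.{v} E] [HasFiniteLimits E] : Prop where
  factor : ∀ ⦃A B : E⦄ (f : A ⟶ B), ∃ (I : E) (e : A ⟶ I) (m : I ⟶ B),
    RegEpi e ∧ Mono m ∧ e ≫ m = f
  stable : ∀ ⦃A B C : E⦄ (f : A ⟶ B) (g : C ⟶ B), RegEpi f → RegEpi (pullback.snd f g)
  effective : ∀ ⦃R X : E⦄ (r₁ r₂ : R ⟶ X), IsEquivRelPair r₁ r₂ →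
    ∃ (Q : E) (q : X ⟶ Q) (w : r₁ ≫ q = r₂ ≫ q),
      Nonempty (IsColimit (Cofork.ofπ q w)) ∧ IsPullback r₁ r₂ q q

/-- A projective cover of `E`: a (full sub)collection of objects, each projective,
such that every object of `E` admits a regular epimorphism from one of them. -/
def IsProjectiveCover (P : Set E) : Prop :=
  (∀ X ∈ P, RegProjective X) ∧ ∀ A : E, ∃ X ∈ P, ∃ p : X ⟶ A, RegEpi p

section FinLim
variable [HasFiniteLimits E]

/-- `X` is internally projective: every arrow `T ⨯ X ⟶ B` lifts along a regular epi
`A ↠ B` after passing to a regular epi `U ↠ T`. -/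
def InternallyProjective (X : E) : Prop :=
  ∀ ⦃T A B : E⦄ (e : A ⟶ B), RegEpi e → ∀ f : T ⨯ X ⟶ B,
    ∃ (U : E) (u : U ⟶ T) (g : U ⨯ X ⟶ A), RegEpi u ∧ g ≫ e = prod.map u (𝟙 X) ≫ f

/-- Cartesian closure, as a property: for every object `X` the functor `(−) ⨯ X` has a
right adjoint. -/
def CartesianClosedP (E : Type u) [Category.{v} E] [HasFiniteLimits E] : Prop :=
  ∀ X : E, (prod.functor.flip.obj X).IsLeftAdjoint

/-- Local cartesian closure, as a property: every slice is cartesian closed. -/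
def LocallyCartesianClosedP (E : Type u) [Category.{v} E] [HasFiniteLimits E] : Prop :=
  ∀ (I : E) (F : Over I), ((prod.functor (C := Over I)).flip.obj F).IsLeftAdjoint

end FinLim

/-! ## Weak products and weak simple products -/

/-- A weak product in `P` of `X` and `Y`: a span through which every span in `P`
factors (not necessarily uniquely). -/
structure IsWeakProduct (P : Set E) {X Y V : E} (p : V ⟶ X) (q : V ⟶ Y) : Prop where
  mem : V ∈ P
  lift : ∀ ⦃V' : E⦄, V' ∈ P → ∀ (p' : V' ⟶ X) (q' : V' ⟶ Y),
    ∃ h : V' ⟶ V, h ≫ p = p' ∧ h ≫ q = q'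

/-- An arrow out of a weak product is determined by projections if it coequalises
every pair of arrows (from an object of `P`) coequalised by both projections. -/
def DeterminedByProjections (P : Set E) {V X Y Z : E} (p : V ⟶ X) (q : V ⟶ Y)
    (f : V ⟶ Z) : Prop :=
  ∀ ⦃V' : E⦄, V' ∈ P → ∀ (h k : V' ⟶ V), h ≫ p = k ≫ p → h ≫ q = k ≫ q → h ≫ f = k ≫ f

/-- A candidate diagram for a weak simple product of a span `J ←f Y →g X`. -/
structure WSPCone (P : Set E) {J Y X : E} (f : Y ⟶ J) (g : Y ⟶ X)
    (W V : E) (w : W ⟶ J) (p : V ⟶ W) (q : V ⟶ X) (e : V ⟶ Y) : Prop where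
  memW : W ∈ P
  wp : IsWeakProduct P p q
  det : DeterminedByProjections P p q e
  comm₁ : p ≫ w = e ≫ f
  comm₂ : q = e ≫ g

/-- A weak simple product: a weakly terminal candidate diagram. -/
structure IsWeakSimpleProduct (P : Set E) {J Y X : E} (f : Y ⟶ J) (g : Y ⟶ X)
    (W V : E) (w : W ⟶ J) (p : V ⟶ W) (q : V ⟶ X) (e : V ⟶ Y) : Prop where
  cone : WSPCone P f g W V w p q e
  lift : ∀ ⦃W' V' : E⦄ (w' : W' ⟶ J) (p' : V' ⟶ W') (q' : V' ⟶ X) (e' : V' ⟶ Y),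
    WSPCone P f g W' V' w' p' q' e' →
    ∃ (α : W' ⟶ W) (β : V' ⟶ V),
      α ≫ w = w' ∧ β ≫ p = p' ≫ α ∧ β ≫ q = q' ∧ β ≫ e = e'

/-- `P` has weak simple products. -/
def HasWeakSimpleProducts (P : Set E) : Prop :=
  ∀ ⦃J Y X : E⦄, J ∈ P → Y ∈ P → X ∈ P → ∀ (f : Y ⟶ J) (g : Y ⟶ X),
    ∃ (W V : E) (w : W ⟶ J) (p : V ⟶ W) (q : V ⟶ X) (e : V ⟶ Y),
      IsWeakSimpleProduct P f g W V w p q e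

/-! ## Pseudo simple products -/

/-- A candidate diagram for a pseudo simple product (no determinacy requirement). -/
structure PSPCone (P : Set E) {J Y X : E} (f : Y ⟶ J) (g : Y ⟶ X)
    (W V : E) (w : W ⟶ J) (p : V ⟶ W) (q : V ⟶ X) (e : V ⟶ Y) : Prop where
  memW : W ∈ P
  wp : IsWeakProduct P p q
  comm₁ : p ≫ w = e ≫ f
  comm₂ : q = e ≫ g

/-- A pseudo simple product: a weakly terminal candidate diagram. -/
structure IsPseudoSimpleProduct (P : Set E) {J Y X : E} (f : Y ⟶ J) (g : Y ⟶ X)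
    (W V : E) (w : W ⟶ J) (p : V ⟶ W) (q : V ⟶ X) (e : V ⟶ Y) : Prop where
  cone : PSPCone P f g W V w p q e
  lift : ∀ ⦃W' V' : E⦄ (w' : W' ⟶ J) (p' : V' ⟶ W') (q' : V' ⟶ X) (e' : V' ⟶ Y),
    PSPCone P f g W' V' w' p' q' e' →
    ∃ (α : W' ⟶ W) (β : V' ⟶ V),
      α ≫ w = w' ∧ β ≫ p = p' ≫ α ∧ β ≫ q = q' ∧ β ≫ e = e'

/-- `P` has pseudo simple products. -/
def HasPseudoSimpleProducts (P : Set E) : Prop :=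
  ∀ ⦃J Y X : E⦄, J ∈ P → Y ∈ P → X ∈ P → ∀ (f : Y ⟶ J) (g : Y ⟶ X),
    ∃ (W V : E) (w : W ⟶ J) (p : V ⟶ W) (q : V ⟶ X) (e : V ⟶ Y),
      IsPseudoSimpleProduct P f g W V w p q e

/-! ## Weak exponentials -/

/-- A candidate diagram for a weak exponential of `X` and `Y`. -/
structure WExpCone (P : Set E) {X Y : E} (W V : E) (p : V ⟶ W) (q : V ⟶ X)
    (e : V ⟶ Y) : Prop where
  memW : W ∈ P
  wp : IsWeakProduct P p q
  det : DeterminedByProjections P p q e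

/-- A weak exponential of `X` and `Y` in `P`. -/
structure IsWeakExponential (P : Set E) {X Y : E} (W V : E) (p : V ⟶ W) (q : V ⟶ X)
    (e : V ⟶ Y) : Prop where
  cone : WExpCone P W V p q e
  lift : ∀ ⦃W' V' : E⦄ (p' : V' ⟶ W') (q' : V' ⟶ X) (e' : V' ⟶ Y),
    WExpCone P W' V' p' q' e' →
    ∃ (α : W' ⟶ W) (β : V' ⟶ V), β ≫ p = p' ≫ α ∧ β ≫ q = q' ∧ β ≫ e = e'

/-- `P` has weak exponentials. -/
def HasWeakExponentials (P : Set E) : Prop :=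
  ∀ ⦃X Y : E⦄, X ∈ P → Y ∈ P →
    ∃ (W V : E) (p : V ⟶ W) (q : V ⟶ X) (e : V ⟶ Y), IsWeakExponential P W V p q e

/-- A quasi exponential of `X` and `B`: the weak universal property of an exponential
restricted to projective sources. -/
def IsQuasiExponential [HasFiniteLimits E] (P : Set E) (X : E) {B : E} (W : E)
    (e : W ⨯ X ⟶ B) : Prop :=
  ∀ ⦃Z : E⦄, Z ∈ P → ∀ f : Z ⨯ X ⟶ B, ∃ g : Z ⟶ W, prod.map g (𝟙 X) ≫ e = f

section FinLim2
variable [HasFiniteLimits E]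

/-! ## Pseudo equivalence relations, equalities and generalised weak (simple) products -/

/-- A pseudo equivalence relation: a pair of parallel arrows whose image in `E` is an
equivalence relation. -/
def IsPseudoEquivRel {Y1 Y0 : E} (y₁ y₂ : Y1 ⟶ Y0) : Prop :=
  ∃ (R : E) (e : Y1 ⟶ R) (m : R ⟶ Y0 ⨯ Y0), RegEpi e ∧ Mono m ∧
    e ≫ m = prod.lift y₁ y₂ ∧ IsEquivRelPair (m ≫ prod.fst) (m ≫ prod.snd)

/-- An equality for a weak limit, relative to the comparison arrow `c : V0 ⟶ L` into
the actual limit: a pseudo equivalence relation `v₁, v₂ : V1 ⇉ V0` in `P` such that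
`c` is a coequaliser of `v₁, v₂` and `V1` regularly covers the kernel pair of `c`. -/
structure IsEqualityFor (P : Set E) {V1 V0 L : E} (c : V0 ⟶ L) (v₁ v₂ : V1 ⟶ V0) :
    Prop where
  mem : V1 ∈ P
  per : IsPseudoEquivRel v₁ v₂
  w : v₁ ≫ c = v₂ ≫ c
  coeq : Nonempty (IsColimit (Cofork.ofπ c w))
  cover : RegEpi (pullback.lift v₁ v₂ w)

/-- An arrow `e : V ⟶ Z0` out of a weak product with projections `p, q` preserves
projections with respect to a pseudo equivalence relation `z₁, z₂ : Z1 ⇉ Z0` if for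
any equality `v₁, v₂ : V1 ⇉ V` for the weak product there is `t : V1 ⟶ Z1` with
`t ≫ zᵢ = vᵢ ≫ e`. -/
def PreservesProjWP (P : Set E) {V X Y Z1 Z0 : E} (p : V ⟶ X) (q : V ⟶ Y)
    (z₁ z₂ : Z1 ⟶ Z0) (e : V ⟶ Z0) : Prop :=
  ∀ ⦃V1 : E⦄ (v₁ v₂ : V1 ⟶ V), IsEqualityFor P (prod.lift p q) v₁ v₂ →
    ∃ t : V1 ⟶ Z1, t ≫ z₁ = v₁ ≫ e ∧ t ≫ z₂ = v₂ ≫ e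

/-- A candidate diagram for a generalised weak simple product of `f` and `g` with
respect to the pseudo equivalence relation `y₁, y₂`. -/
structure GWSPCone (P : Set E) {Y1 Y0 J X : E} (y₁ y₂ : Y1 ⟶ Y0) (f : Y0 ⟶ J)
    (g : Y0 ⟶ X) (W V : E) (w : W ⟶ J) (p : V ⟶ W) (q : V ⟶ X) (e : V ⟶ Y0) :
    Prop where
  memW : W ∈ P
  wp : IsWeakProduct P p q
  pres : PreservesProjWP P p q y₁ y₂ e
  comm₁ : p ≫ w = e ≫ f
  comm₂ : q = e ≫ g

/-- A generalised weak simple product: a weakly terminal candidate diagram. -/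
structure IsGWSP (P : Set E) {Y1 Y0 J X : E} (y₁ y₂ : Y1 ⟶ Y0) (f : Y0 ⟶ J)
    (g : Y0 ⟶ X) (W V : E) (w : W ⟶ J) (p : V ⟶ W) (q : V ⟶ X) (e : V ⟶ Y0) :
    Prop where
  cone : GWSPCone P y₁ y₂ f g W V w p q e
  lift : ∀ ⦃W' V' : E⦄ (w' : W' ⟶ J) (p' : V' ⟶ W') (q' : V' ⟶ X) (e' : V' ⟶ Y0),
    GWSPCone P y₁ y₂ f g W' V' w' p' q' e' →
    ∃ (α : W' ⟶ W) (β : V' ⟶ V),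
      α ≫ w = w' ∧ β ≫ p = p' ≫ α ∧ β ≫ q = q' ∧ β ≫ e = e'

/-- `P` has generalised weak simple products. -/
def HasGWSP (P : Set E) : Prop :=
  ∀ ⦃Y1 Y0 J X : E⦄, Y1 ∈ P → Y0 ∈ P → J ∈ P → X ∈ P →
    ∀ (y₁ y₂ : Y1 ⟶ Y0), IsPseudoEquivRel y₁ y₂ →
    ∀ (f : Y0 ⟶ J) (g : Y0 ⟶ X), y₁ ≫ f = y₂ ≫ f → y₁ ≫ g = y₂ ≫ g →
    ∃ (W V : E) (w : W ⟶ J) (p : V ⟶ W) (q : V ⟶ X) (e : V ⟶ Y0),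
      IsGWSP P y₁ y₂ f g W V w p q e

/-- A candidate diagram for a generalised weak exponential of `X` and `y₁, y₂`. -/
structure GWExpCone (P : Set E) {X Y1 Y0 : E} (y₁ y₂ : Y1 ⟶ Y0)
    (W V : E) (p : V ⟶ W) (q : V ⟶ X) (e : V ⟶ Y0) : Prop where
  memW : W ∈ P
  wp : IsWeakProduct P p q
  pres : PreservesProjWP P p q y₁ y₂ e

/-- A generalised weak exponential of `X` and a pseudo equivalence relation. -/
structure IsGWExp (P : Set E) {X Y1 Y0 : E} (y₁ y₂ : Y1 ⟶ Y0)
    (W V : E) (p : V ⟶ W) (q : V ⟶ X) (e : V ⟶ Y0) : Prop where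
  cone : GWExpCone P y₁ y₂ W V p q e
  lift : ∀ ⦃W' V' : E⦄ (p' : V' ⟶ W') (q' : V' ⟶ X) (e' : V' ⟶ Y0),
    GWExpCone P y₁ y₂ W' V' p' q' e' →
    ∃ (α : W' ⟶ W) (β : V' ⟶ V), β ≫ p = p' ≫ α ∧ β ≫ q = q' ∧ β ≫ e = e'

/-! ## Weak pullbacks and generalised weak dependent products -/

/-- A weak pullback in `P` of the cospan `X →f J ←w W`. -/
structure IsWeakPullback (P : Set E) {X J W V : E} (f : X ⟶ J) (w : W ⟶ J)
    (a : V ⟶ X) (b : V ⟶ W) : Prop where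
  mem : V ∈ P
  comm : a ≫ f = b ≫ w
  lift : ∀ ⦃V' : E⦄, V' ∈ P → ∀ (a' : V' ⟶ X) (b' : V' ⟶ W), a' ≫ f = b' ≫ w →
    ∃ h : V' ⟶ V, h ≫ a = a' ∧ h ≫ b = b'

/-- Preservation of projections for an arrow out of a weak pullback. -/
def PreservesProjWPB (P : Set E) {V X J W Z1 Z0 : E} (f : X ⟶ J) (w : W ⟶ J)
    (a : V ⟶ X) (b : V ⟶ W) (h : a ≫ f = b ≫ w) (z₁ z₂ : Z1 ⟶ Z0) (e : V ⟶ Z0) :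
    Prop :=
  ∀ ⦃V1 : E⦄ (v₁ v₂ : V1 ⟶ V), IsEqualityFor P (pullback.lift a b h) v₁ v₂ →
    ∃ t : V1 ⟶ Z1, t ≫ z₁ = v₁ ≫ e ∧ t ≫ z₂ = v₂ ≫ e

/-- A candidate diagram for a generalised weak dependent product of `g : Y0 ⟶ X`
along `f : X ⟶ J` with respect to `y₁, y₂`. -/
structure GWDPCone (P : Set E) {Y1 Y0 X J : E} (y₁ y₂ : Y1 ⟶ Y0) (g : Y0 ⟶ X)
    (f : X ⟶ J) (W V : E) (w : W ⟶ J) (a : V ⟶ X) (b : V ⟶ W) (e : V ⟶ Y0) :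
    Prop where
  memW : W ∈ P
  comm : a ≫ f = b ≫ w
  wpb : IsWeakPullback P f w a b
  overX : e ≫ g = a
  pres : PreservesProjWPB P f w a b comm y₁ y₂ e

/-- A generalised weak dependent product: a weakly terminal candidate diagram. -/
structure IsGWDP (P : Set E) {Y1 Y0 X J : E} (y₁ y₂ : Y1 ⟶ Y0) (g : Y0 ⟶ X)
    (f : X ⟶ J) (W V : E) (w : W ⟶ J) (a : V ⟶ X) (b : V ⟶ W) (e : V ⟶ Y0) :
    Prop where
  cone : GWDPCone P y₁ y₂ g f W V w a b e
  lift : ∀ ⦃W' V' : E⦄ (w' : W' ⟶ J) (a' : V' ⟶ X) (b' : V' ⟶ W') (e' : V' ⟶ Y0),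
    GWDPCone P y₁ y₂ g f W' V' w' a' b' e' →
    ∃ (α : W' ⟶ W) (β : V' ⟶ V),
      α ≫ w = w' ∧ β ≫ a = a' ∧ β ≫ b = b' ≫ α ∧ β ≫ e = e'

/-- `P` has generalised weak dependent products (i.e. `P` is weakly locally cartesian
closed). -/
def HasGWDP (P : Set E) : Prop :=
  ∀ ⦃Y1 Y0 X J : E⦄, Y1 ∈ P → Y0 ∈ P → X ∈ P → J ∈ P →
    ∀ (y₁ y₂ : Y1 ⟶ Y0), IsPseudoEquivRel y₁ y₂ →
    ∀ (g : Y0 ⟶ X) (f : X ⟶ J), y₁ ≫ g = y₂ ≫ g →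
    ∃ (W V : E) (w : W ⟶ J) (a : V ⟶ X) (b : V ⟶ W) (e : V ⟶ Y0),
      IsGWDP P y₁ y₂ g f W V w a b e

/-! ## The functor `w_X` on subobjects induced by weak simple products -/

/-- The adjunction property of the weak-simple-product operation `w_X` on subobjects:
for every subobject `a : A ↪ J ⨯ X`, every `P`-cover `Y ↠ A`, every weak simple
product `W → J` of the induced span and every image factorisation `W ↠ I ↪ J` of it,
the subobject `I ↪ J` is a value at `a` of a right adjoint to
`(−) ⨯ X : Sub(J) → Sub(J ⨯ X)`. -/
def WAdj (P : Set E) (J X : E) : Prop :=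
  ∀ ⦃A : E⦄ (a : A ⟶ J ⨯ X), Mono a →
  ∀ ⦃Y : E⦄, Y ∈ P → ∀ (c : Y ⟶ A), RegEpi c →
  ∀ ⦃W V : E⦄ (w : W ⟶ J) (p : V ⟶ W) (q : V ⟶ X) (e : V ⟶ Y),
    IsWeakSimpleProduct P (c ≫ a ≫ prod.fst) (c ≫ a ≫ prod.snd) W V w p q e →
  ∀ ⦃I : E⦄ (ew : W ⟶ I) (m : I ⟶ J), RegEpi ew → Mono m → ew ≫ m = w →
  ∀ ⦃B : E⦄ (b : B ⟶ J), Mono b →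
    ((∃ t : B ⨯ X ⟶ A, t ≫ a = prod.map b (𝟙 X)) ↔ ∃ s : B ⟶ I, s ≫ m = b)

/-! ## Weak dependent products (à la Carboni–Rosolini) -/

/-- `P` has weak dependent products: for `f : X ⟶ J` and `g : Y ⟶ X` in `P` there are
`w : W ⟶ J` in `P` and a surjection `Hom_{P/J}(h, w) → Hom_{P/X}(f*(h), g)` natural
in `h ∈ P/J`. -/
def HasWeakDependentProducts (P : Set E) : Prop :=
  ∀ ⦃X J Y : E⦄, X ∈ P → J ∈ P → Y ∈ P → ∀ (f : X ⟶ J) (g : Y ⟶ X),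
    ∃ (W : E) (_ : W ∈ P) (w : W ⟶ J)
      (ε : ∀ ⦃T : E⦄, T ∈ P → ∀ (h : T ⟶ J) (k : T ⟶ W), k ≫ w = h →
        (pullback h f ⟶ Y)),
      (∀ ⦃T : E⦄ (hT : T ∈ P) (h : T ⟶ J) (k : T ⟶ W) (hk : k ≫ w = h),
         ε hT h k hk ≫ g = pullback.snd h f) ∧
      (∀ ⦃T : E⦄ (hT : T ∈ P) (h : T ⟶ J) (d : pullback h f ⟶ Y),
         d ≫ g = pullback.snd h f → ∃ (k : T ⟶ W) (hk : k ≫ w = h), ε hT h k hk = d) ∧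
      (∀ ⦃T' T : E⦄ (hT' : T' ∈ P) (hT : T ∈ P) (u : T' ⟶ T) (h : T ⟶ J) (k : T ⟶ W)
         (hk : k ≫ w = h),
         ε hT' (u ≫ h) (u ≫ k) (by rw [Category.assoc, hk]) =
           pullback.map (u ≫ h) f h f u (𝟙 X) (𝟙 J) (by simp) (by simp) ≫ ε hT h k hk)

end FinLim2

lemma RegEpi.isRegularEpi {A B : E} {f : A ⟶ B} (h : RegEpi f) : IsRegularEpi f := ⟨h⟩

lemma nonempty_isColimit_cofork_precomp_epi {R Y1 Y0 Q : E} {r₁ r₂ : R ⟶ Y0} {c : Y0 ⟶ Q}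
    {w : r₁ ≫ c = r₂ ≫ c} (h : IsColimit (Cofork.ofπ c w)) (e : Y1 ⟶ R) [Epi e]
    {w' : (e ≫ r₁) ≫ c = (e ≫ r₂) ≫ c} : Nonempty (IsColimit (Cofork.ofπ c w')) := by
  refine ⟨Cofork.IsColimit.mk' _ fun s => ?_⟩
  have hs : r₁ ≫ s.π = r₂ ≫ s.π := (cancel_epi e).1 (by simpa using s.condition)
  exact ⟨Cofork.IsColimit.desc h s.π hs, Cofork.IsColimit.π_desc' h s.π hs,
    fun hm => Cofork.IsColimit.hom_ext h (hm.trans (Cofork.IsColimit.π_desc' h s.π hs).symm)⟩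

section Exact

variable [HasFiniteLimits E]

lemma IsExact.regEpi_of_strongEpi (hE : IsExact E) {A B : E} (f : A ⟶ B) [StrongEpi f] :
    RegEpi f := by
  obtain ⟨I, e, m, ⟨he⟩, hm, rfl⟩ := hE.factor f
  have := strongEpi_of_strongEpi e m
  have := isIso_of_mono_of_strongEpi m
  exact ⟨RegularEpi.ofArrowIso (Arrow.isoMk' e (e ≫ m) (Iso.refl A) (asIso m)) he⟩

lemma IsExact.regEpi_comp (hE : IsExact E) {A B C : E} {f : A ⟶ B} {g : B ⟶ C}
    (hf : RegEpi f) (hg : RegEpi g) : RegEpi (f ≫ g) := by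
  have := hf.isRegularEpi
  have := hg.isRegularEpi
  exact hE.regEpi_of_strongEpi _

lemma IsExact.regEpi_of_regEpi_comp (hE : IsExact E) {A B C : E} {f : A ⟶ B} {g : B ⟶ C}
    (h : RegEpi (f ≫ g)) : RegEpi g := by
  have := h.isRegularEpi
  have := strongEpi_of_strongEpi f g
  exact hE.regEpi_of_strongEpi g

end Exact

section Equalities

variable [HasFiniteLimits E] {P : Set E}

lemma isEquivRelPair_kernelPair {A B : E} (f : A ⟶ B) :
    IsEquivRelPair (pullback.fst f f) (pullback.snd f f) where
  jointlyMono _ _ _ h₁ h₂ := pullback.hom_ext h₁ h₂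
  refl := ⟨pullback.lift (𝟙 A) (𝟙 A) rfl, pullback.lift_fst _ _ _, pullback.lift_snd _ _ _⟩
  symm := ⟨pullback.lift _ _ pullback.condition.symm, pullback.lift_fst _ _ _,
    pullback.lift_snd _ _ _⟩
  trans _ a b hab := by
    have h : (a ≫ pullback.fst f f) ≫ f = (b ≫ pullback.snd f f) ≫ f := by
      simp only [Category.assoc]
      rw [pullback.condition, reassoc_of% hab, pullback.condition]
    exact ⟨pullback.lift _ _ h, pullback.lift_fst _ _ _, pullback.lift_snd _ _ _⟩

lemma IsEquivRelPair.isPseudoEquivRel_comp {R Y1 Y0 : E} {r₁ r₂ : R ⟶ Y0}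
    (hr : IsEquivRelPair r₁ r₂) {e : Y1 ⟶ R} (he : RegEpi e) :
    IsPseudoEquivRel (e ≫ r₁) (e ≫ r₂) := by
  refine ⟨R, e, prod.lift r₁ r₂, he, ⟨fun a b hab => hr.jointlyMono a b ?_ ?_⟩, ?_, ?_⟩
  · simpa only [Category.assoc, prod.lift_fst] using hab =≫ prod.fst
  · simpa only [Category.assoc, prod.lift_snd] using hab =≫ prod.snd
  · ext <;> simp
  · simpa only [prod.lift_fst, prod.lift_snd] using hr

namespace IsEqualityFor

variable {V1 V0 L : E} {c : V0 ⟶ L} {v₁ v₂ : V1 ⟶ V0}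

lemma regEpi (h : IsEqualityFor P c v₁ v₂) : RegEpi c :=
  ⟨Cofork.IsColimit.regularEpi h.coeq.some⟩

lemma exists_desc (h : IsEqualityFor P c v₁ v₂) {Z : E} (k : V0 ⟶ Z) (hk : v₁ ≫ k = v₂ ≫ k) :
    ∃ l : L ⟶ Z, c ≫ l = k :=
  ⟨_, Cofork.IsColimit.π_desc' h.coeq.some k hk⟩

lemma exists_lift (h : IsEqualityFor P c v₁ v₂) {T : E} (hT : RegProjective T)
    (a b : T ⟶ V0) (hab : a ≫ c = b ≫ c) : ∃ t : T ⟶ V1, t ≫ v₁ = a ∧ t ≫ v₂ = b := by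
  obtain ⟨t, ht⟩ := hT _ h.cover (pullback.lift a b hab)
  exact ⟨t, by simpa [pullback.lift_fst] using ht =≫ pullback.fst c c,
    by simpa [pullback.lift_snd] using ht =≫ pullback.snd c c⟩

end IsEqualityFor

lemma exists_isEqualityFor_of_regEpi (hP : IsProjectiveCover P) {V0 L : E} {c : V0 ⟶ L}
    (hc : RegEpi c) : ∃ (V1 : E) (v₁ v₂ : V1 ⟶ V0), IsEqualityFor P c v₁ v₂ := by
  have := hc.isRegularEpi
  obtain ⟨V1, hV1, d, hd⟩ := hP.2 (pullback c c)
  have := hd.isRegularEpi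
  refine ⟨V1, d ≫ pullback.fst c c, d ≫ pullback.snd c c, hV1,
    (isEquivRelPair_kernelPair c).isPseudoEquivRel_comp hd, by simp [pullback.condition],
    nonempty_isColimit_cofork_precomp_epi
      (isColimitCoforkOfEffectiveEpi c _ (pullback.isLimit c c)) d, ?_⟩
  convert hd
  ext <;> simp [pullback.lift_fst, pullback.lift_snd]

lemma IsPseudoEquivRel.exists_isEqualityFor (hE : IsExact E) {Y1 Y0 : E} (hY1 : Y1 ∈ P)
    {y₁ y₂ : Y1 ⟶ Y0} (hy : IsPseudoEquivRel y₁ y₂) :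
    ∃ (Q : E) (c : Y0 ⟶ Q), IsEqualityFor P c y₁ y₂ := by
  obtain ⟨R, e, m, he, -, hem, hR⟩ := id hy
  obtain ⟨Q, c, w, ⟨hc⟩, hpb⟩ := hE.effective _ _ hR
  have := he.isRegularEpi
  have hy₁ : y₁ = e ≫ m ≫ prod.fst := by rw [reassoc_of% hem, prod.lift_fst]
  have hy₂ : y₂ = e ≫ m ≫ prod.snd := by rw [reassoc_of% hem, prod.lift_snd]
  subst hy₁ hy₂
  refine ⟨Q, c, hY1, hy, by simp [w], nonempty_isColimit_cofork_precomp_epi hc e, ?_⟩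
  convert hE.regEpi_comp he ⟨RegularEpi.ofIso hpb.isoPullback⟩
  ext <;> simp [pullback.lift_fst, pullback.lift_snd]

lemma isWeakProduct_of_regEpi (hP : IsProjectiveCover P) {V X Y : E} (hV : V ∈ P)
    {p : V ⟶ X} {q : V ⟶ Y} (h : RegEpi (prod.lift p q)) : IsWeakProduct P p q where
  mem := hV
  lift V' hV' p' q' := by
    obtain ⟨t, ht⟩ := hP.1 V' hV' _ h (prod.lift p' q')
    exact ⟨t, by simpa [prod.lift_fst] using ht =≫ prod.fst,
      by simpa [prod.lift_snd] using ht =≫ prod.snd⟩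

lemma IsWeakProduct.regEpi_lift (hE : IsExact E) (hP : IsProjectiveCover P) {V X Y : E}
    {p : V ⟶ X} {q : V ⟶ Y} (h : IsWeakProduct P p q) : RegEpi (prod.lift p q) := by
  obtain ⟨Z, hZ, z, hz⟩ := hP.2 (X ⨯ Y)
  obtain ⟨t, ht₁, ht₂⟩ := h.lift hZ (z ≫ prod.fst) (z ≫ prod.snd)
  refine hE.regEpi_of_regEpi_comp (f := t) ?_
  convert hz
  ext <;> simp [ht₁, ht₂, prod.lift_fst, prod.lift_snd]

end Equalities

section CartesianClosed

variable [HasFiniteLimits E]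

def IsExponential {X R B : E} (ε : R ⨯ X ⟶ B) : Prop :=
  ∀ ⦃T : E⦄ (φ : T ⨯ X ⟶ B), ∃! l : T ⟶ R, prod.map l (𝟙 X) ≫ ε = φ

lemma CartesianClosedP.exists_isExponential (hcc : CartesianClosedP E) (X B : E) :
    ∃ (R : E) (ε : R ⨯ X ⟶ B), IsExponential ε := by
  have := hcc X
  let adj := Adjunction.ofIsLeftAdjoint (prod.functor.flip.obj X)
  refine ⟨_, adj.counit.app B, fun T φ => ⟨adj.homEquiv T B φ, ?_, fun l hl => ?_⟩⟩
  · have h := (adj.homEquiv T B).symm_apply_apply φ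
    rw [Adjunction.homEquiv_counit] at h
    exact h
  · have h : (adj.homEquiv T B).symm l = φ := by
      rw [Adjunction.homEquiv_counit]
      exact hl
    rw [← h, Equiv.apply_symm_apply]

lemma IsExponential.hom_ext {X R B : E} {ε : R ⨯ X ⟶ B} (hε : IsExponential ε) {T : E}
    {a b : T ⟶ R} (h : prod.map a (𝟙 X) ≫ ε = prod.map b (𝟙 X) ≫ ε) : a = b :=
  (hε _).unique h rfl

/-- `s : S ⟶ J` is the dependent product of `k` along the projection `J ⨯ X ⟶ J`: the
object of pairs `(j, σ)` with `σ` a section of `k` over `{j} ⨯ X`, `ev` being evaluation. -/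
structure IsSimpleProduct {Q J X S : E} (k : Q ⟶ J ⨯ X) (s : S ⟶ J) (ev : S ⨯ X ⟶ Q) :
    Prop where
  comm : ev ≫ k = prod.map s (𝟙 X)
  lift : ∀ ⦃T : E⦄ (t : T ⟶ J) (φ : T ⨯ X ⟶ Q), φ ≫ k = prod.map t (𝟙 X) →
    ∃ l : T ⟶ S, l ≫ s = t ∧ prod.map l (𝟙 X) ≫ ev = φ

lemma exists_isSimpleProduct (hcc : CartesianClosedP E) {Q J X : E} (k : Q ⟶ J ⨯ X) :
    ∃ (S : E) (s : S ⟶ J) (ev : S ⨯ X ⟶ Q), IsSimpleProduct k s ev := by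
  obtain ⟨RQ, εQ, hQ⟩ := hcc.exists_isExponential X Q
  obtain ⟨RJX, εJX, hJX⟩ := hcc.exists_isExponential X (J ⨯ X)
  obtain ⟨u₁, hu₁, -⟩ := hJX (prod.map prod.snd (𝟙 X) ≫ εQ ≫ k : (J ⨯ RQ) ⨯ X ⟶ J ⨯ X)
  obtain ⟨u₂, hu₂, -⟩ := hJX (prod.map prod.fst (𝟙 X) : (J ⨯ RQ) ⨯ X ⟶ J ⨯ X)
  have sections : ∀ {T : E} (ψ : T ⟶ J ⨯ RQ), ψ ≫ u₁ = ψ ≫ u₂ ↔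
      (prod.map (ψ ≫ prod.snd) (𝟙 X) ≫ εQ) ≫ k = prod.map (ψ ≫ prod.fst) (𝟙 X) := by
    intro T ψ
    have h₁ : prod.map (ψ ≫ u₁) (𝟙 X) ≫ εJX = (prod.map (ψ ≫ prod.snd) (𝟙 X) ≫ εQ) ≫ k := by
      simp only [prod.map_comp_id, Category.assoc, hu₁]
    have h₂ : prod.map (ψ ≫ u₂) (𝟙 X) ≫ εJX = prod.map (ψ ≫ prod.fst) (𝟙 X) := by
      simp only [prod.map_comp_id, Category.assoc, hu₂]
    rw [← h₁, ← h₂]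
    exact ⟨fun h => by rw [h], hJX.hom_ext⟩
  refine ⟨equalizer u₁ u₂, equalizer.ι u₁ u₂ ≫ prod.fst,
    prod.map (equalizer.ι u₁ u₂ ≫ prod.snd) (𝟙 X) ≫ εQ,
    (sections _).1 (equalizer.condition u₁ u₂), ?_⟩
  intro T t φ hφ
  obtain ⟨l, hl, -⟩ := hQ φ
  have hsec : prod.lift t l ≫ u₁ = prod.lift t l ≫ u₂ :=
    (sections _).2 (by rw [prod.lift_fst, prod.lift_snd, hl, hφ])
  refine ⟨equalizer.lift _ hsec, by rw [equalizer.lift_ι_assoc, prod.lift_fst], ?_⟩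
  rw [← prod.map_comp_id_assoc, equalizer.lift_ι_assoc, prod.lift_snd, hl]

end CartesianClosed

section Construction

variable [HasFiniteLimits E] {P : Set E} {Y1 Y0 J X Q : E} {y₁ y₂ : Y1 ⟶ Y0} {f : Y0 ⟶ J}
  {g : Y0 ⟶ X} {c : Y0 ⟶ Q} {k : Q ⟶ J ⨯ X}

lemma gwspCone_of_cover (hE : IsExact E) (hP : IsProjectiveCover P)
    (hc : IsEqualityFor P c y₁ y₂) (hk : c ≫ k = prod.lift f g) {W V : E} (hW : W ∈ P)
    (hV : V ∈ P) {w : W ⟶ J} {ev : W ⨯ X ⟶ Q} (hev : ev ≫ k = prod.map w (𝟙 X))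
    {d : V ⟶ pullback c ev} (hd : RegEpi d) :
    GWSPCone P y₁ y₂ f g W V w (d ≫ pullback.snd c ev ≫ prod.fst)
      (d ≫ pullback.snd c ev ≫ prod.snd) (d ≫ pullback.fst c ev) := by
  have hlift : prod.lift (d ≫ pullback.snd c ev ≫ prod.fst) (d ≫ pullback.snd c ev ≫ prod.snd)
      = d ≫ pullback.snd c ev := by
    ext <;> simp [prod.lift_fst, prod.lift_snd]
  have hfg : d ≫ pullback.fst c ev ≫ prod.lift f g =
      (d ≫ pullback.snd c ev) ≫ prod.map w (𝟙 X) := by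
    rw [← hk, ← hev, pullback.condition_assoc, Category.assoc]
  refine ⟨hW, isWeakProduct_of_regEpi hP hV ?_, ?_, ?_, ?_⟩
  · rw [hlift]
    exact hE.regEpi_comp hd (hE.stable c ev hc.regEpi)
  · intro V1 v₁ v₂ hv
    refine hc.exists_lift (hP.1 _ hv.mem) _ _ ?_
    have := hv.w
    rw [hlift] at this
    simp only [Category.assoc, pullback.condition, reassoc_of% this]
  · simpa [prod.lift_fst] using (hfg =≫ prod.fst).symm
  · simpa [prod.lift_snd] using (hfg =≫ prod.snd).symm

lemma GWSPCone.exists_desc (hE : IsExact E) (hP : IsProjectiveCover P)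
    (hc : IsEqualityFor P c y₁ y₂) (hk : c ≫ k = prod.lift f g) {W V : E} {w : W ⟶ J}
    {p : V ⟶ W} {q : V ⟶ X} {e : V ⟶ Y0} (h : GWSPCone P y₁ y₂ f g W V w p q e) :
    ∃ φ : W ⨯ X ⟶ Q, prod.lift p q ≫ φ = e ≫ c ∧ φ ≫ k = prod.map w (𝟙 X) := by
  have hpq := h.wp.regEpi_lift hE hP
  obtain ⟨V1, v₁, v₂, hv⟩ := exists_isEqualityFor_of_regEpi hP hpq
  obtain ⟨t, ht₁, ht₂⟩ := h.pres v₁ v₂ hv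
  obtain ⟨φ, hφ⟩ := hv.exists_desc (e ≫ c) (by rw [← reassoc_of% ht₁, ← reassoc_of% ht₂, hc.w])
  refine ⟨φ, hφ, ?_⟩
  have := hpq.isRegularEpi
  rw [← cancel_epi (prod.lift p q), reassoc_of% hφ, hk]
  ext <;> simp [prod.lift_fst, prod.lift_snd, h.comm₁, h.comm₂]

lemma exists_isGWSP (hE : IsExact E) (hP : IsProjectiveCover P)
    (hc : IsEqualityFor P c y₁ y₂) (hk : c ≫ k = prod.lift f g) {S : E} {s : S ⟶ J}
    {ev : S ⨯ X ⟶ Q} (hS : IsSimpleProduct k s ev) :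
    ∃ (W V : E) (w : W ⟶ J) (p : V ⟶ W) (q : V ⟶ X) (e : V ⟶ Y0),
      IsGWSP P y₁ y₂ f g W V w p q e := by
  obtain ⟨W, hW, a, ha⟩ := hP.2 S
  have hev : (prod.map a (𝟙 X) ≫ ev) ≫ k = prod.map (a ≫ s) (𝟙 X) := by
    rw [Category.assoc, hS.comm, prod.map_comp_id]
  obtain ⟨V, hV, d, hd⟩ := hP.2 (pullback c (prod.map a (𝟙 X) ≫ ev))
  refine ⟨W, V, a ≫ s, _, _, _, gwspCone_of_cover hE hP hc hk hW hV hev hd, ?_⟩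
  intro W' V' w' p' q' e' h
  obtain ⟨φ, hφ, hφk⟩ := h.exists_desc hE hP hc hk
  obtain ⟨l, hl, hlφ⟩ := hS.lift w' φ hφk
  obtain ⟨α, hα⟩ := hP.1 _ h.memW a ha l
  have hαφ : prod.map α (𝟙 X) ≫ prod.map a (𝟙 X) ≫ ev = φ := by
    rw [← prod.map_comp_id_assoc, hα, hlφ]
  obtain ⟨β, hβ⟩ := hP.1 _ h.wp.mem d hd
    (pullback.lift e' (prod.lift p' q' ≫ prod.map α (𝟙 X)) (by rw [Category.assoc, hαφ, hφ]))
  refine ⟨α, β, by rw [reassoc_of% hα, hl], ?_, ?_, ?_⟩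
  · simp [reassoc_of% hβ, pullback.lift_snd_assoc, prod.lift_fst]
  · simp [reassoc_of% hβ, pullback.lift_snd_assoc, prod.lift_snd]
  · simp [reassoc_of% hβ, pullback.lift_fst]

end Construction

/-- If `E` is cartesian closed, then `P` has generalised weak simple
products. -/
theorem stmt14 {E : Type u} [Category.{v} E] [HasFiniteLimits E]
    (hE : IsExact E) (P : Set E) (hP : IsProjectiveCover P)
    (hcc : CartesianClosedP E) :
    HasGWSP P := by
  intro Y1 Y0 J X hY1 _ _ _ y₁ y₂ hy f g hf hg
  obtain ⟨Q, c, hc⟩ := hy.exists_isEqualityFor hE hY1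
  obtain ⟨k, hk⟩ := hc.exists_desc (prod.lift f g)
    (by ext <;> simp [prod.lift_fst, prod.lift_snd, hf, hg])
  obtain ⟨S, s, ev, hS⟩ := exists_isSimpleProduct hcc k
  exact exists_isGWSP hE hP hc hk hS

end ExComp
end

section
/- Let E be an exact category with enough projectives and P a projective cover of E. If P has generalised weak simple products, then P has generalised weak exponentials: for every object X of P and every pseudo equivalence relation y1, y2 : Y1 ⇉ Y0 in P, a generalised weak exponential of X and y1, y2 exists. -/
open CategoryTheory Limits

namespace ExComp

universe v u

variable {E : Type u} [Category.{v} E]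

/-! Let `J ∈ P` cover the terminal object and `Z0 ∈ P` cover `Y0 ⨯ (J ⨯ X)`. Pulling the
image of `y₁, y₂` back along `Z0 → Y0`, inside the fibres of `Z0 → J ⨯ X`, gives an equivalence
relation on `Z0`; a `P`-cover of it is a pseudo equivalence relation `z₁, z₂` that
`Z0 → J` and `Z0 → X` coequalise. The generalised weak simple product of these two arrows with
respect to `z₁, z₂` is the generalised weak exponential. Projectivity of the objects of `P`
lets related pairs of `P`-elements pass between the two relations, and gives every competitor
an arrow to `J` and a lift of its evaluation to `Z0`. -/

attribute [local simp] prod.lift_fst prod.lift_snd prod.lift_fst_assoc prod.lift_snd_assoc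
  pullback.lift_fst pullback.lift_snd pullback.lift_fst_assoc pullback.lift_snd_assoc

section Relations

def JointlyMono {R X : E} (r₁ r₂ : R ⟶ X) : Prop :=
  ∀ ⦃T : E⦄ (h k : T ⟶ R), h ≫ r₁ = k ≫ r₁ → h ≫ r₂ = k ≫ r₂ → h = k

def Relates {R X T : E} (r₁ r₂ : R ⟶ X) (a b : T ⟶ X) : Prop :=
  ∃ t : T ⟶ R, t ≫ r₁ = a ∧ t ≫ r₂ = b

namespace IsEquivRelPair

variable {R X : E} {r₁ r₂ : R ⟶ X}

lemma relates_refl (hR : IsEquivRelPair r₁ r₂) {T : E} (a : T ⟶ X) : Relates r₁ r₂ a a := by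
  obtain ⟨d, hd₁, hd₂⟩ := hR.refl
  exact ⟨a ≫ d, by simp [hd₁], by simp [hd₂]⟩

lemma relates_symm (hR : IsEquivRelPair r₁ r₂) {T : E} {a b : T ⟶ X}
    (hab : Relates r₁ r₂ a b) : Relates r₁ r₂ b a := by
  obtain ⟨s, hs₁, hs₂⟩ := hR.symm
  obtain ⟨t, rfl, rfl⟩ := hab
  exact ⟨t ≫ s, by simp [hs₁], by simp [hs₂]⟩

lemma relates_trans (hR : IsEquivRelPair r₁ r₂) {T : E} {a b c : T ⟶ X}
    (hab : Relates r₁ r₂ a b) (hbc : Relates r₁ r₂ b c) : Relates r₁ r₂ a c := by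
  obtain ⟨t, rfl, htb⟩ := hab
  obtain ⟨t', ht'b, rfl⟩ := hbc
  exact hR.trans t t' (htb.trans ht'b.symm)

lemma of_relates (hm : JointlyMono r₁ r₂)
    (hrefl : ∀ ⦃T : E⦄ (a : T ⟶ X), Relates r₁ r₂ a a)
    (hsymm : ∀ ⦃T : E⦄ ⦃a b : T ⟶ X⦄, Relates r₁ r₂ a b → Relates r₁ r₂ b a)
    (htrans : ∀ ⦃T : E⦄ ⦃a b c : T ⟶ X⦄,
      Relates r₁ r₂ a b → Relates r₁ r₂ b c → Relates r₁ r₂ a c) :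
    IsEquivRelPair r₁ r₂ where
  jointlyMono := hm
  refl := hrefl (𝟙 X)
  symm := hsymm ⟨𝟙 R, Category.id_comp _, Category.id_comp _⟩
  trans := fun _ p q hpq => htrans ⟨p, rfl, rfl⟩ ⟨q, hpq.symm, rfl⟩

end IsEquivRelPair

lemma relates_comp_iff_of_projective {R' R X T : E} {c : R' ⟶ R} (hc : RegEpi c)
    (hT : RegProjective T) (r₁ r₂ : R ⟶ X) (a b : T ⟶ X) : Relates (c ≫ r₁) (c ≫ r₂) a b ↔ Relates r₁ r₂ a b := by
  constructor
  · rintro ⟨t, rfl, rfl⟩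
    exact ⟨t ≫ c, Category.assoc _ _ _, Category.assoc _ _ _⟩
  · rintro ⟨t, rfl, rfl⟩
    obtain ⟨t', rfl⟩ := hT c hc t
    exact ⟨t', (Category.assoc _ _ _).symm, (Category.assoc _ _ _).symm⟩

variable [HasFiniteLimits E]

lemma IsEquivRelPair.isPseudoEquivRel_comp_s16 {Y1 S Y : E} {s₁ s₂ : S ⟶ Y} (hS : IsEquivRelPair s₁ s₂)
    {d : Y1 ⟶ S} (hd : RegEpi d) : IsPseudoEquivRel (d ≫ s₁) (d ≫ s₂) := by
  refine ⟨S, d, prod.lift s₁ s₂, hd, ⟨fun h k hhk => hS.jointlyMono h k ?_ ?_⟩, by simp,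
    by simpa using hS⟩
  · simpa using hhk =≫ prod.fst
  · simpa using hhk =≫ prod.snd

lemma IsEqualityFor.comp_eq {P : Set E} {V1 V A B : E} {p : V ⟶ A} {q : V ⟶ B}
    {v₁ v₂ : V1 ⟶ V} (hv : IsEqualityFor P (prod.lift p q) v₁ v₂) :
    v₁ ≫ p = v₂ ≫ p ∧ v₁ ≫ q = v₂ ≫ q :=
  ⟨by simpa using hv.w =≫ prod.fst, by simpa using hv.w =≫ prod.snd⟩

end Relations

section RelComap

variable [HasFiniteLimits E] {R Z Y K : E} (r₁ r₂ : R ⟶ Z) (u : Y ⟶ Z) (k : Y ⟶ K)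

/-- The inverse image of the relation `r₁, r₂` along `u`, intersected with the kernel pair
of `k`. -/
noncomputable abbrev relComap : E :=
  equalizer (pullback.snd (prod.lift r₁ r₂) (prod.map u u) ≫ prod.fst ≫ k)
    (pullback.snd (prod.lift r₁ r₂) (prod.map u u) ≫ prod.snd ≫ k)

namespace relComap

noncomputable def rel : relComap r₁ r₂ u k ⟶ R :=
  equalizer.ι _ _ ≫ pullback.fst (prod.lift r₁ r₂) (prod.map u u)

noncomputable def fst : relComap r₁ r₂ u k ⟶ Y :=
  equalizer.ι _ _ ≫ pullback.snd (prod.lift r₁ r₂) (prod.map u u) ≫ prod.fst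

noncomputable def snd : relComap r₁ r₂ u k ⟶ Y :=
  equalizer.ι _ _ ≫ pullback.snd (prod.lift r₁ r₂) (prod.map u u) ≫ prod.snd

lemma rel_comp_fst : rel r₁ r₂ u k ≫ r₁ = fst r₁ r₂ u k ≫ u := by
  have := pullback.condition (f := prod.lift r₁ r₂) (g := prod.map u u) =≫ prod.fst
  simp only [Category.assoc, prod.lift_fst, prod.map_fst] at this
  simp [rel, fst, this]

lemma rel_comp_snd : rel r₁ r₂ u k ≫ r₂ = snd r₁ r₂ u k ≫ u := by
  have := pullback.condition (f := prod.lift r₁ r₂) (g := prod.map u u) =≫ prod.snd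
  simp only [Category.assoc, prod.lift_snd, prod.map_snd] at this
  simp [rel, snd, this]

lemma condition : fst r₁ r₂ u k ≫ k = snd r₁ r₂ u k ≫ k := by
  simpa [fst, snd] using equalizer.condition _ _

variable {r₁ r₂ u k}

lemma relates_iff {T : E} (a b : T ⟶ Y) :
    Relates (fst r₁ r₂ u k) (snd r₁ r₂ u k) a b ↔
      Relates r₁ r₂ (a ≫ u) (b ≫ u) ∧ a ≫ k = b ≫ k := by
  constructor
  · rintro ⟨s, rfl, rfl⟩
    exact ⟨⟨s ≫ rel r₁ r₂ u k, by simp [rel_comp_fst], by simp [rel_comp_snd]⟩,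
      by simp [condition]⟩
  · rintro ⟨⟨t, ht₁, ht₂⟩, hk⟩
    let l : T ⟶ pullback (prod.lift r₁ r₂) (prod.map u u) :=
      pullback.lift t (prod.lift a b) (by ext <;> simp [ht₁, ht₂])
    exact ⟨equalizer.lift l (by simp [l, hk]), by simp [l, fst], by simp [l, snd]⟩

lemma jointlyMono (hR : JointlyMono r₁ r₂) : JointlyMono (fst r₁ r₂ u k) (snd r₁ r₂ u k) := by
  intro T h h' h₁ h₂
  have hrel : h ≫ rel r₁ r₂ u k = h' ≫ rel r₁ r₂ u k :=
    hR _ _ (by simp [rel_comp_fst, reassoc_of% h₁]) (by simp [rel_comp_snd, reassoc_of% h₂])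
  refine equalizer.hom_ext (pullback.hom_ext (by simpa [rel] using hrel) ?_)
  ext
  · simpa [fst] using h₁
  · simpa [snd] using h₂

lemma isEquivRelPair (hR : IsEquivRelPair r₁ r₂) :
    IsEquivRelPair (fst r₁ r₂ u k) (snd r₁ r₂ u k) := by
  refine .of_relates (jointlyMono hR.jointlyMono)
    (fun _ a => (relates_iff a a).2 ⟨hR.relates_refl _, rfl⟩) (fun _ a b hab => ?_)
    (fun _ a b c hab hbc => ?_)
  · rw [relates_iff] at hab ⊢
    exact ⟨hR.relates_symm hab.1, hab.2.symm⟩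
  · rw [relates_iff] at hab hbc ⊢
    exact ⟨hR.relates_trans hab.1 hbc.1, hab.2.trans hbc.2⟩

end relComap

end RelComap

theorem IsGWSP.isGWExp [HasFiniteLimits E] {P : Set E} {Y1 Y0 Z1 Z0 J X W V : E}
    {y₁ y₂ : Y1 ⟶ Y0} {z₁ z₂ : Z1 ⟶ Z0} {u : Z0 ⟶ Y0} {f : Z0 ⟶ J} {g : Z0 ⟶ X}
    (hrel : ∀ ⦃T : E⦄, T ∈ P → ∀ a b : T ⟶ Z0, Relates z₁ z₂ a b ↔
      Relates y₁ y₂ (a ≫ u) (b ≫ u) ∧ a ≫ f = b ≫ f ∧ a ≫ g = b ≫ g)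
    (hlift : ∀ ⦃T : E⦄, T ∈ P → ∀ (j : T ⟶ J) (y : T ⟶ Y0) (x : T ⟶ X),
      ∃ l : T ⟶ Z0, l ≫ f = j ∧ l ≫ u = y ∧ l ≫ g = x)
    (hmapJ : ∀ ⦃T : E⦄, T ∈ P → Nonempty (T ⟶ J))
    {w : W ⟶ J} {p : V ⟶ W} {q : V ⟶ X} {e : V ⟶ Z0}
    (he : IsGWSP P z₁ z₂ f g W V w p q e) : IsGWExp P y₁ y₂ W V p q (e ≫ u) := by
  refine ⟨⟨he.cone.memW, he.cone.wp, fun V1 v₁ v₂ hv => ?_⟩, fun W' V' p' q' e' hc => ?_⟩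
  · simpa only [Relates, Category.assoc] using ((hrel hv.mem _ _).1 (he.cone.pres v₁ v₂ hv)).1
  obtain ⟨w'⟩ := hmapJ hc.memW
  obtain ⟨l, hlf, rfl, hlg⟩ := hlift hc.wp.mem (p' ≫ w') e' q'
  have hpres : PreservesProjWP P p' q' z₁ z₂ l := by
    intro V1 v₁ v₂ hv
    obtain ⟨hp, hq⟩ := hv.comp_eq
    refine (hrel hv.mem _ _).2
      ⟨by simpa only [Relates, Category.assoc] using hc.pres v₁ v₂ hv, ?_, ?_⟩
    · simp [hlf, reassoc_of% hp]
    · simp [hlg, hq]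
  obtain ⟨α, β, -, hβp, hβq, hβe⟩ :=
    he.lift w' p' q' l ⟨hc.memW, hc.wp, hpres, hlf.symm, hlg.symm⟩
  exact ⟨α, β, hβp, hβq, by rw [reassoc_of% hβe]⟩

theorem stmt16_general {E : Type u} [Category.{v} E] [HasFiniteLimits E]
    (P : Set E) (hP : IsProjectiveCover P)
    (h : HasGWSP P) :
    ∀ ⦃X Y1 Y0 : E⦄, X ∈ P → Y1 ∈ P → Y0 ∈ P →
      ∀ (y₁ y₂ : Y1 ⟶ Y0), IsPseudoEquivRel y₁ y₂ →
      ∃ (W V : E) (p : V ⟶ W) (q : V ⟶ X) (e : V ⟶ Y0),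
        IsGWExp P y₁ y₂ W V p q e := by
  intro X Y1 Y0 hX _ _ y₁ y₂ ⟨R, er, m, her, _, hm, hR⟩
  obtain ⟨hproj, hcov⟩ := hP
  obtain ⟨J, hJ, j, hj⟩ := hcov (⊤_ E)
  obtain ⟨Z0, hZ0, c, hc⟩ := hcov (Y0 ⨯ (J ⨯ X))
  obtain rfl : y₁ = er ≫ m ≫ prod.fst := by rw [reassoc_of% hm, prod.lift_fst]
  obtain rfl : y₂ = er ≫ m ≫ prod.snd := by rw [reassoc_of% hm, prod.lift_snd]
  set u := c ≫ prod.fst with hu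
  set k := c ≫ prod.snd with hk
  obtain ⟨Z1, hZ1, d, hd⟩ := hcov (relComap (m ≫ prod.fst) (m ≫ prod.snd) u k)
  have hrel : ∀ ⦃T : E⦄, T ∈ P → ∀ a b : T ⟶ Z0,
      Relates (d ≫ relComap.fst ..) (d ≫ relComap.snd ..) a b ↔
        Relates (er ≫ m ≫ prod.fst) (er ≫ m ≫ prod.snd) (a ≫ u) (b ≫ u) ∧
          a ≫ k ≫ prod.fst = b ≫ k ≫ prod.fst ∧ a ≫ k ≫ prod.snd = b ≫ k ≫ prod.snd :=
    fun T hT a b => by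
      rw [relates_comp_iff_of_projective hd (hproj T hT), relComap.relates_iff,
        relates_comp_iff_of_projective her (hproj T hT), prod.hom_ext_iff]
      simp only [Category.assoc]
  obtain ⟨W, V, w, p, q, e, he⟩ :=
    h hZ1 hZ0 hJ hX _ _ ((relComap.isEquivRelPair hR).isPseudoEquivRel_comp_s16 hd)
      (k ≫ prod.fst) (k ≫ prod.snd)
      ((hrel hZ1 _ _).1 ⟨𝟙 _, by simp, by simp⟩).2.1
      ((hrel hZ1 _ _).1 ⟨𝟙 _, by simp, by simp⟩).2.2
  refine ⟨W, V, p, q, e ≫ u, he.isGWExp hrel (fun T hT j y x => ?_)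
    (fun T hT => ⟨(hproj T hT j hj (terminal.from T)).choose⟩)⟩
  obtain ⟨l, hl⟩ := hproj T hT c hc (prod.lift y (prod.lift j x))
  exact ⟨l, by simp [hk, reassoc_of% hl], by simp [hu, reassoc_of% hl],
    by simp [hk, reassoc_of% hl]⟩

/-- If `P` has generalised weak simple products, then `P` has
generalised weak exponentials. -/
theorem stmt16 {E : Type u} [Category.{v} E] [HasFiniteLimits E]
    (hE : IsExact E) (P : Set E) (hP : IsProjectiveCover P)
    (h : HasGWSP P) :
    ∀ ⦃X Y1 Y0 : E⦄, X ∈ P → Y1 ∈ P → Y0 ∈ P →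
      ∀ (y₁ y₂ : Y1 ⟶ Y0), IsPseudoEquivRel y₁ y₂ →
      ∃ (W V : E) (p : V ⟶ W) (q : V ⟶ X) (e : V ⟶ Y0),
        IsGWExp P y₁ y₂ W V p q e :=
  stmt16_general P hP h

end ExComp
end

section
/- Let C be the poset whose underlying set is ℕ together with two additional elements a and b, partially ordered by the reflexive-transitive closure of the relations n < n + 1, n < a, and n < b for every n ∈ ℕ (so a and b are incomparable). In the category of presheaves of sets on C: (i) the image of the unique morphism from the presheaf y(ℕ) := ∐_{n ∈ ℕ} y(n) to the terminal presheaf is the subterminal presheaf y(a) × y(b); (ii) the terminal presheaf is not projective with respect to epimorphisms; and (iii) the presheaf y(a) × y(b) is not projective with respect to epimorphisms, even though y(a) and y(b) are projective. In particular, a product of two projective objects in a presheaf topos need not be projective. -/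
open CategoryTheory Limits

namespace Stmt19

/-- The underlying set of the poset `C`: the natural numbers together with two extra
elements `a` and `b`. -/
inductive Cob : Type
  | nat : ℕ → Cob
  | a : Cob
  | b : Cob

namespace Cob

/-- The order on `C`: the reflexive-transitive closure of `n < n + 1`, `n < a` and
`n < b` (so `a` and `b` are incomparable, and above all naturals). -/
def le : Cob → Cob → Prop
  | .nat n, .nat m => n ≤ m
  | .nat _, .a => True
  | .nat _, .b => True
  | .a, .a => True
  | .b, .b => True
  | _, _ => False

instance : PartialOrder Cob where
  le := Cob.le
  le_refl x := by cases x <;> simp [Cob.le]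
  le_trans x y z hxy hyz := by
    cases x <;> cases y <;> cases z <;> simp_all [Cob.le] <;> omega
  le_antisymm x y hxy hyx := by
    cases x <;> cases y <;> simp_all [Cob.le] <;> omega

/-- The generating relations hold in the order. -/
theorem nat_le_succ (n : ℕ) : Cob.nat n ≤ Cob.nat (n + 1) := by
  show Cob.le _ _; simp [Cob.le]

theorem nat_le_a (n : ℕ) : Cob.nat n ≤ Cob.a := trivial

theorem nat_le_b (n : ℕ) : Cob.nat n ≤ Cob.b := trivial

theorem not_a_le_b : ¬ (Cob.a ≤ Cob.b) := fun h => h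

theorem not_b_le_a : ¬ (Cob.b ≤ Cob.a) := fun h => h

end Cob

/-- The presheaf `y(ℕ) = ∐_{n ∈ ℕ} y(n)`. -/
noncomputable def yN : Cobᵒᵖ ⥤ Type := ∐ fun n : ℕ => yoneda.obj (Cob.nat n)

/-- The representable presheaf `y(a)`. -/
def yA : Cobᵒᵖ ⥤ Type := yoneda.obj Cob.a

/-- The representable presheaf `y(b)`. -/
def yB : Cobᵒᵖ ⥤ Type := yoneda.obj Cob.b

end Stmt19

/-!
Over a preorder, `∐ i, y(X i)` is the presheaf of indices `i` with `x ≤ X i`, and a map into it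
from a subterminal presheaf inhabited at `x` selects a single index `i` with `y ≤ X i` for every
`y ≥ x` at which the presheaf is inhabited. The terminal presheaf is covered by `y(a) ⨿ y(b)`, but
a section would give an index above both `a` and `b`. The product `y(a) × y(b)` is the
subterminal presheaf inhabited exactly at the naturals, covered by `∐ₙ y(n)`, but a section would
give one `n` above every natural.
-/

universe u

open Opposite

namespace CategoryTheory

section Presheaf

variable {C : Type u} [SmallCategory C]

theorem projective_yoneda_obj (X : C) : Projective (yoneda.obj X) where
  factors f e _ := by
    obtain ⟨u, hu⟩ := (epi_iff_surjective (e.app (op X))).1 inferInstance (yonedaEquiv f)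
    refine ⟨yonedaEquiv.symm u, yonedaEquiv.injective ?_⟩
    rw [yonedaEquiv_comp, Equiv.apply_symm_apply, hu]

theorem IsSubterminal.subsingleton_obj {F : Cᵒᵖ ⥤ Type u} (hF : IsSubterminal F) (X : C) :
    Subsingleton (F.obj (op X)) :=
  ⟨fun _ _ => yonedaEquiv.symm.injective (hF _ _)⟩

theorem isSubterminal_of_subsingleton_obj {F : Cᵒᵖ ⥤ Type u}
    (hF : ∀ X, Subsingleton (F.obj X)) : IsSubterminal F :=
  fun _ _ _ => by ext X u; exact Subsingleton.elim _ _

theorem epi_of_isSubterminal_of_nonempty {F G : Cᵒᵖ ⥤ Type u} (f : F ⟶ G) (hG : IsSubterminal G)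
    (hF : ∀ X, G.obj (op X) → Nonempty (F.obj (op X))) : Epi f := by
  rw [NatTrans.epi_iff_epi_app]
  rintro ⟨X⟩
  rw [epi_iff_surjective]
  intro v
  obtain ⟨u⟩ := hF X v
  exact ⟨u, (hG.subsingleton_obj X).elim _ _⟩

end Presheaf

theorem IsSubterminal.prod {C : Type*} [Category C] [HasBinaryProducts C] {A B : C}
    (hA : IsSubterminal A) (hB : IsSubterminal B) : IsSubterminal (A ⨯ B) :=
  fun _ _ _ => prod.hom_ext (hA _ _) (hB _ _)

section Preorder

variable {P : Type u} [Preorder P]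

theorem isSubterminal_yoneda_obj (p : P) : IsSubterminal (yoneda.obj p) :=
  isSubterminal_of_subsingleton_obj fun x => inferInstanceAs (Subsingleton (x.unop ⟶ p))

/-- A concrete model of `∐ i, yoneda.obj (X i)`: over a preorder every summand takes at most one
value, so an element over `x` is just an index `i` with `x ≤ X i`. -/
def sigmaYoneda {ι : Type u} (X : ι → P) : Pᵒᵖ ⥤ Type u where
  obj x := {i : ι // x.unop ≤ X i}
  map f := TypeCat.ofHom fun i => ⟨i.1, (leOfHom f.unop).trans i.2⟩

noncomputable def sigmaToSigmaYoneda {ι : Type u} (X : ι → P) :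
    ∐ (fun i => yoneda.obj (X i)) ⟶ sigmaYoneda X :=
  Limits.Sigma.desc fun i => yonedaEquiv.symm (⟨i, le_rfl⟩ : {j : ι // X i ≤ X j})

theorem exists_index_le_of_sigmaYoneda {ι : Type u} {X : ι → P} {F : Pᵒᵖ ⥤ Type u}
    (hF : IsSubterminal F) (t : F ⟶ sigmaYoneda X) {x : P} (u : F.obj (op x)) :
    ∃ i, ∀ y, x ≤ y → F.obj (op y) → y ≤ X i := by
  refine ⟨(t.app (op x) u : {i // x ≤ X i}).1, fun y hxy v => ?_⟩
  rw [(hF.subsingleton_obj x).elim u (F.map (homOfLE hxy).op v), NatTrans.naturality_apply]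
  exact (t.app (op y) v).2

end Preorder

end CategoryTheory

namespace Stmt19

namespace Cob

theorem nat_le_nat_iff {m n : ℕ} : nat m ≤ nat n ↔ m ≤ n := Iff.rfl

theorem le_a_or_le_b (x : Cob) : x ≤ a ∨ x ≤ b := by
  cases x
  exacts [.inl (nat_le_a _), .inl le_rfl, .inr le_rfl]

theorem exists_nat_of_le_a_of_le_b {x : Cob} (ha : x ≤ a) (hb : x ≤ b) : ∃ n, x = nat n := by
  cases x
  exacts [⟨_, rfl⟩, (not_a_le_b hb).elim, (not_b_le_a ha).elim]

end Cob

theorem isSubterminal_yA_prod_yB : IsSubterminal (yA ⨯ yB) :=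
  (isSubterminal_yoneda_obj _).prod (isSubterminal_yoneda_obj _)

noncomputable def yN_to_yA_prod_yB : yN ⟶ yA ⨯ yB :=
  Sigma.desc fun n => prod.lift (yoneda.map (homOfLE (Cob.nat_le_a n)))
    (yoneda.map (homOfLE (Cob.nat_le_b n)))

theorem yA_prod_yB_obj_nat_nonempty (n : ℕ) :
    Nonempty ((yA ⨯ yB).obj (op (Cob.nat n))) :=
  ⟨yonedaEquiv (prod.lift (yoneda.map (homOfLE (Cob.nat_le_a n)))
    (yoneda.map (homOfLE (Cob.nat_le_b n))))⟩

theorem epi_yN_to_yA_prod_yB : Epi yN_to_yA_prod_yB := by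
  refine epi_of_isSubterminal_of_nonempty _ isSubterminal_yA_prod_yB fun x z => ?_
  obtain ⟨n, rfl⟩ := Cob.exists_nat_of_le_a_of_le_b
    (leOfHom ((prod.fst : yA ⨯ yB ⟶ yA).app _ z)) (leOfHom ((prod.snd : yA ⨯ yB ⟶ yB).app _ z))
  exact ⟨(Sigma.ι (fun n : ℕ => yoneda.obj (Cob.nat n)) n).app _ (𝟙 _)⟩

theorem not_projective_terminal : ¬ Projective (⊤_ (Cobᵒᵖ ⥤ Type)) := by
  intro _
  let X : Bool → Cob := fun c => cond c Cob.a Cob.b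
  have : Epi (terminal.from (sigmaYoneda X)) :=
    epi_of_isSubterminal_of_nonempty _ isSubterminal_of_terminal fun x _ =>
      (Cob.le_a_or_le_b x).elim (fun h => ⟨⟨true, h⟩⟩) (fun h => ⟨⟨false, h⟩⟩)
  let t := Projective.factorThru (𝟙 _) (terminal.from (sigmaYoneda X))
  have pt (x : Cob) : (⊤_ (Cobᵒᵖ ⥤ Type)).obj (op x) := yonedaEquiv (terminal.from _)
  obtain ⟨i, hi⟩ := exists_index_le_of_sigmaYoneda isSubterminal_of_terminal t (pt (Cob.nat 0))
  have ha := hi _ (Cob.nat_le_a 0) (pt _)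
  have hb := hi _ (Cob.nat_le_b 0) (pt _)
  cases i
  exacts [Cob.not_a_le_b ha, Cob.not_b_le_a hb]

theorem not_projective_yA_prod_yB : ¬ Projective (yA ⨯ yB) := by
  intro _
  have := epi_yN_to_yA_prod_yB
  let t := Projective.factorThru (𝟙 _) yN_to_yA_prod_yB ≫ sigmaToSigmaYoneda Cob.nat
  have pt (n : ℕ) := (yA_prod_yB_obj_nat_nonempty n).some
  obtain ⟨k, hk⟩ := exists_index_le_of_sigmaYoneda isSubterminal_yA_prod_yB t (pt 0)
  have := hk (Cob.nat (k + 1)) (Cob.nat_le_nat_iff.2 (Nat.zero_le _)) (pt _)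
  exact absurd (Cob.nat_le_nat_iff.1 this) (Nat.lt_irrefl _)

/-- In presheaves on `C = ℕ ∪ {a, b}`:
(i) the image of the unique morphism `y(ℕ) ⟶ 1` is the subterminal presheaf
`y(a) ⨯ y(b)`, i.e. the unique map factors as an epimorphism
`y(ℕ) ⟶ y(a) ⨯ y(b)` followed by the monomorphism `y(a) ⨯ y(b) ⟶ 1`;
(ii) the terminal presheaf is not projective;
(iii) `y(a) ⨯ y(b)` is not projective, although `y(a)` and `y(b)` are projective.
In particular a product of projectives need not be projective. -/
theorem stmt19 :
    (∃ e : yN ⟶ yA ⨯ yB, Epi e ∧ Mono (terminal.from (yA ⨯ yB)) ∧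
        e ≫ terminal.from (yA ⨯ yB) = terminal.from yN) ∧
    ¬ Projective (⊤_ (Cobᵒᵖ ⥤ Type)) ∧
    ¬ Projective (yA ⨯ yB) ∧
    Projective yA ∧ Projective yB :=
  ⟨⟨yN_to_yA_prod_yB, epi_yN_to_yA_prod_yB, isSubterminal_yA_prod_yB.mono_terminal_from,
    terminal.hom_ext _ _⟩,
    not_projective_terminal, not_projective_yA_prod_yB, projective_yoneda_obj _,
    projective_yoneda_obj _⟩

end Stmt19
end
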